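/- The 3:3 configuration for $n=6$, with Gram matrix having unit diagonal and off-diagonal entries $A = \frac{-7+3\sqrt{6}}{5}$ (within each triangle), $B = \frac{11-4\sqrt{6}}{5}$ (between aligned points of different triangles), and $C = \frac{-1-\sqrt{6}}{5}$ (between non-aligned points of different triangles), satisfies the polynomial system for critical configurations of the logarithmic Fekete problem with $6$ points. Moreover, replacing $\sqrt{6}$ by $-\sqrt{6}$ in $A$, $B$, $C$ also yields a solution. -/
import Mathlib


open Finset Matrix

/-- The polynomial system for critical configurations of the logarithmic Fekete
problem with `n` points, in the Gram matrix variables `X i j`. -/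
def FeketeSystem (n : ℕ) (X : Matrix (Fin n) (Fin n) ℝ) : Prop :=
  X.IsSymm ∧ (∀ i, X i i = 1) ∧ (∀ i j, i ≠ j → X i j ≠ 1) ∧
  (∀ j, 1 + ∑ k ∈ Finset.univ.erase j, X j k = 0) ∧
  (∀ i k, k ≠ i →
    ∑ j ∈ Finset.univ.erase k, (X i k - X i j) / (1 - X k j) = ((n : ℝ) - 1) * X i k)

/-- Gram matrix of the `3:3` configuration, parametrized by `t` (either `√6` or `-√6`):
entries `A = (-7+3t)/5` within each triangle, `B = (11-4t)/5` between aligned points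
of different triangles, `C = (-1-t)/5` between non-aligned points of different
triangles. Points `0,1,2` form one triangle and `3,4,5` the other, point `i` being
aligned with point `i+3`. -/
noncomputable def threeThreeGram (t : ℝ) : Matrix (Fin 6) (Fin 6) ℝ := fun i j =>
  if i = j then 1
  else if ((i : ℕ) < 3 ∧ (j : ℕ) < 3) ∨ (3 ≤ (i : ℕ) ∧ 3 ≤ (j : ℕ)) then (-7 + 3 * t) / 5
  else if (j : ℕ) = (i : ℕ) + 3 ∨ (i : ℕ) = (j : ℕ) + 3 then (11 - 4 * t) / 5
  else (-1 - t) / 5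

lemma fv0 : ((0 : Fin 6) : ℕ) = 0 := rfl
lemma fv1 : ((1 : Fin 6) : ℕ) = 1 := rfl
lemma fv2 : ((2 : Fin 6) : ℕ) = 2 := rfl
lemma fv3 : ((3 : Fin 6) : ℕ) = 3 := rfl
lemma fv4 : ((4 : Fin 6) : ℕ) = 4 := rfl
lemma fv5 : ((5 : Fin 6) : ℕ) = 5 := rfl

set_option maxHeartbeats 2000000 in
theorem three_three_is_critical (t : ℝ)
    (ht : t = Real.sqrt 6 ∨ t = -Real.sqrt 6) :
    FeketeSystem 6 (threeThreeGram t) := by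
  have ht2 : t ^ 2 = 6 := by
    rcases ht with h | h <;> subst h <;>
      linear_combination Real.sq_sqrt (show (0:ℝ) ≤ 6 by norm_num)
  have h3 : t^3 = 6*t := by linear_combination t * ht2
  have h4 : t^4 = 36 := by linear_combination (t^2+6) * ht2
  have h5 : t^5 = 36*t := by linear_combination (t^3+6*t) * ht2
  have h6 : t^6 = 216 := by linear_combination (t^4+6*t^2+36) * ht2
  have h7 : t^7 = 216*t := by linear_combination (t^5+6*t^3+36*t) * ht2
  have h8 : t^8 = 1296 := by linear_combination (t^6+6*t^4+36*t^2+216) * ht2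
  have d1 : (1:ℝ) - (-7 + 3*t)/5 ≠ 0 := by intro h; nlinarith
  have d2 : (1:ℝ) - (11 - 4*t)/5 ≠ 0 := by intro h; nlinarith
  have d3 : (1:ℝ) - (-1 - t)/5 ≠ 0 := by intro h; nlinarith
  have e1 : (12:ℝ) - t*3 ≠ 0 := by intro h; nlinarith
  have e2 : (-6:ℝ) + t*4 ≠ 0 := by intro h; nlinarith
  have e3 : (6:ℝ) + t ≠ 0 := by intro h; nlinarith
  refine ⟨?_, ?_, ?_, ?_, ?_⟩
  · ext i j
    fin_cases i <;> fin_cases j <;>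
      norm_num [threeThreeGram, Matrix.transpose_apply, Fin.ext_iff, show ((0:Fin 6):ℕ) = 0 from rfl, show ((1:Fin 6):ℕ) = 1 from rfl, show ((2:Fin 6):ℕ) = 2 from rfl, show ((3:Fin 6):ℕ) = 3 from rfl, show ((4:Fin 6):ℕ) = 4 from rfl, show ((5:Fin 6):ℕ) = 5 from rfl]
  · intro i
    simp [threeThreeGram]
  · intro i j hij
    fin_cases i <;> fin_cases j <;>
      first
        | exact absurd rfl hij
        | (simp only [threeThreeGram, show ((0:Fin 6):ℕ) = 0 from rfl, show ((1:Fin 6):ℕ) = 1 from rfl, show ((2:Fin 6):ℕ) = 2 from rfl, show ((3:Fin 6):ℕ) = 3 from rfl, show ((4:Fin 6):ℕ) = 4 from rfl, show ((5:Fin 6):ℕ) = 5 from rfl]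
           norm_num
           first
             | (intro h; nlinarith [ht2])
             | exact ⟨by decide, fun h => by nlinarith [ht2]⟩)
  · intro j
    fin_cases j <;>
      [skip; skip; skip; skip; skip; skip] <;>
      (rw [Finset.sum_erase_eq_sub (Finset.mem_univ _), Fin.sum_univ_six]
       simp only [threeThreeGram, show ((0:Fin 6):ℕ) = 0 from rfl, show ((1:Fin 6):ℕ) = 1 from rfl, show ((2:Fin 6):ℕ) = 2 from rfl, show ((3:Fin 6):ℕ) = 3 from rfl, show ((4:Fin 6):ℕ) = 4 from rfl, show ((5:Fin 6):ℕ) = 5 from rfl]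
       norm_num [Fin.ext_iff, show ((0:Fin 6):ℕ) = 0 from rfl, show ((1:Fin 6):ℕ) = 1 from rfl, show ((2:Fin 6):ℕ) = 2 from rfl, show ((3:Fin 6):ℕ) = 3 from rfl, show ((4:Fin 6):ℕ) = 4 from rfl, show ((5:Fin 6):ℕ) = 5 from rfl]
       ring_nf)
  · intro i k hk
    fin_cases i <;> fin_cases k <;>
      first
        | exact absurd rfl hk
        | (rw [Finset.sum_erase _ (by simp [threeThreeGram])]
           rw [Fin.sum_univ_six]
           simp only [threeThreeGram, show ((0:Fin 6):ℕ) = 0 from rfl, show ((1:Fin 6):ℕ) = 1 from rfl, show ((2:Fin 6):ℕ) = 2 from rfl, show ((3:Fin 6):ℕ) = 3 from rfl, show ((4:Fin 6):ℕ) = 4 from rfl, show ((5:Fin 6):ℕ) = 5 from rfl]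
           norm_num [Fin.ext_iff, show ((0:Fin 6):ℕ) = 0 from rfl, show ((1:Fin 6):ℕ) = 1 from rfl, show ((2:Fin 6):ℕ) = 2 from rfl, show ((3:Fin 6):ℕ) = 3 from rfl, show ((4:Fin 6):ℕ) = 4 from rfl, show ((5:Fin 6):ℕ) = 5 from rfl]
           field_simp
           ring_nf
           field_simp
           ring_nf
           linarith [ht2, h3, h4, h5, h6, h7, h8])
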